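/- Let k ≥ 2 and let d, D be positive integers with k ≤ dD, and let C_k be the associated transfer matrix. Then for any two transpositions t, t' ∈ S_k one has ⟨t|C_k|t'⟩ = 0 if t ≠ t', and ⟨t|C_k|t⟩ = (dD² − d)/(d²D² − 1). That is, the diagonal block of C_k corresponding to the transpositions equals μ₂ times the identity, where μ₂ = (dD² − d)/(d²D² − 1). -/

import Mathlib

open Equiv Matrix

/-!
`q ^ #(στ⁻¹)` counts the colourings `f : Fin k → Fin q` with `f ∘ σ = f ∘ τ`, so `G(q) = B Bᵀ`
with `B σ (f, g) = [g = f ∘ σ]`; evaluating at an injective colouring shows that the rows of `B`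
are independent when `k ≤ q`, so `G(q)` is positive definite, in particular invertible.

Multiplying by a transposition `(a b)` changes the number of cycles by exactly one: it changes
because the sign `(-1)^(k - #σ)` flips, and by at most one because `σ` and `σ (a b)` have the
same cycle partition once the cycles through `a` and `b` are merged. Hence the vector
`σ ↦ d^{#(σ)} D^{#(σ (a b))}` equals `G(dD)` applied to `α e_id + β e_(a b)` as soon as
`α + dD β = D` and `dD α + β = d`, i.e. `β = μ₂(d, D)` and `α = μ₂(D, d)`. Since
`Wg = G(dD)⁻¹` is symmetric, the column `(a b)` of `C_k` is `Wg` applied to that vector,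
namely `α e_id + β e_(a b)`.
-/

/-- Number of cycles of a permutation, counting fixed points as 1-cycles. -/
noncomputable def cyc {k : ℕ} (π : Equiv.Perm (Fin k)) : ℕ :=
  (k - π.cycleType.sum) + Multiset.card π.cycleType

/-- Gram matrix `G(q)_{στ} = q^{#(στ⁻¹)}`. -/
noncomputable def Gram (k q : ℕ) :
    Matrix (Equiv.Perm (Fin k)) (Equiv.Perm (Fin k)) ℝ :=
  Matrix.of fun σ τ => (q : ℝ) ^ cyc (σ * τ⁻¹)

/-- Weingarten matrix `W = G(q)⁻¹`, so that `Wg(στ⁻¹, q) = W σ τ`. -/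
noncomputable def WgM (k q : ℕ) :
    Matrix (Equiv.Perm (Fin k)) (Equiv.Perm (Fin k)) ℝ :=
  (Gram k q)⁻¹

/-- Transfer matrix `⟨τ|C_k|θ⟩ = Σ_σ Wg(στ⁻¹, dD) d^{#(σ)} D^{#(σθ⁻¹)}`. -/
noncomputable def Ck (k d D : ℕ) :
    Matrix (Equiv.Perm (Fin k)) (Equiv.Perm (Fin k)) ℝ :=
  Matrix.of fun τ θ =>
    ∑ σ : Equiv.Perm (Fin k),
      WgM k (d * D) σ τ * (d : ℝ) ^ cyc σ * (D : ℝ) ^ cyc (σ * θ⁻¹)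

namespace Equiv.Perm

variable {α β : Type*}

theorem SameCycle.setoid_le {f : Perm α} {s : Setoid α} (h : ∀ x, s (f x) x) :
    SameCycle.setoid f ≤ s := by
  have key : ∀ (i : ℤ) (x : α), s ((f ^ i) x) x := by
    intro i
    induction i using Int.induction_on with
    | zero => exact fun x => s.refl x
    | succ i ih =>
      intro x
      rw [_root_.zpow_add_one, mul_apply]
      exact s.trans (ih (f x)) (h x)
    | pred i ih =>
      intro x
      rw [_root_.zpow_sub_one, mul_apply]
      refine s.trans (ih (f⁻¹ x)) (s.symm ?_)
      simpa using h (f⁻¹ x)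
  rintro x _ ⟨i, rfl⟩
  exact s.symm (key i x)

theorem nat_card_comp_eq_self [Finite α] (f : Perm α) :
    Nat.card {g : α → β // g ∘ f = g} =
      Nat.card β ^ Nat.card (Quotient (SameCycle.setoid f)) := by
  have : Finite (Quotient (SameCycle.setoid f)) := Quotient.finite _
  have hiff : ∀ g : α → β, g ∘ f = g ↔ SameCycle.setoid f ≤ Setoid.ker g := fun g =>
    ⟨fun hg => SameCycle.setoid_le fun x => congrFun hg x,
      fun hg => funext fun x => hg (sameCycle_apply_left.2 SameCycle.rfl)⟩
  rw [Nat.card_congr ((Equiv.subtypeEquivRight hiff).trans (Setoid.liftEquiv _)), Nat.card_fun]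

theorem nat_card_quotient_sameCycle [Fintype α] [DecidableEq α] (f : Perm α) :
    Nat.card (Quotient (SameCycle.setoid f)) =
      Fintype.card (Function.fixedPoints f) + f.cycleFactorsFinset.card := by
  let F : α → Function.fixedPoints f ⊕ f.cycleFactorsFinset := fun x =>
    if hx : f x = x then .inl ⟨x, hx⟩
    else .inr ⟨f.cycleOf x, cycleOf_mem_cycleFactorsFinset_iff.2 (mem_support.2 hx)⟩
  have hF : ∀ x y, F x = F y ↔ f.SameCycle x y := by
    intro x y
    by_cases hx : f x = x <;> by_cases hy : f y = y
    · simp only [F, dif_pos hx, dif_pos hy, Sum.inl.injEq, Subtype.ext_iff]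
      exact ⟨fun h => h ▸ SameCycle.rfl, fun h => h.eq_of_left hx⟩
    · simp only [F, dif_pos hx, dif_neg hy, reduceCtorEq, false_iff]
      exact fun h => hy (h.apply_eq_self_iff.1 hx)
    · simp only [F, dif_neg hx, dif_pos hy, reduceCtorEq, false_iff]
      exact fun h => hx (h.apply_eq_self_iff.2 hy)
    · simp only [F, dif_neg hx, dif_neg hy, Sum.inr.injEq, Subtype.mk.injEq]
      refine ⟨fun h => ?_, SameCycle.cycleOf_eq⟩
      rw [← mem_support_cycleOf_iff' hx, h, mem_support_cycleOf_iff' hy]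
  have hsurj : Function.Surjective F := by
    rintro (⟨x, hx⟩ | ⟨c, hc⟩)
    · exact ⟨x, dif_pos hx⟩
    · obtain ⟨x, hx, -⟩ := (mem_cycleFactorsFinset_iff.1 hc).1
      have hxc : x ∈ c.support := mem_support.2 hx
      have hxf : f x ≠ x := mem_support.1 (mem_cycleFactorsFinset_support_le hc hxc)
      refine ⟨x, ?_⟩
      simp only [F, dif_neg hxf, cycle_is_cycleOf hxc hc]
  have hker : SameCycle.setoid f = Setoid.ker F := Setoid.ext fun x y => (hF x y).symm
  rw [hker, Nat.card_congr (Setoid.quotientKerEquivOfSurjective F hsurj), Nat.card_sum,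
    Nat.card_eq_fintype_card, Nat.card_eq_fintype_card, Fintype.card_coe]

end Equiv.Perm

namespace Setoid

variable {α : Type*}

def merge (r : Setoid α) (a b : α) : Setoid α where
  r x y := r x y ∨ (r x a ∨ r x b) ∧ (r y a ∨ r y b)
  iseqv :=
    { refl := fun x => .inl (r.refl x)
      symm := by
        rintro x y (h | ⟨hx, hy⟩)
        exacts [.inl (r.symm h), .inr ⟨hy, hx⟩]
      trans := by
        rintro x y z (hxy | ⟨hx, hy⟩) (hyz | ⟨hy', hz⟩)
        · exact .inl (r.trans hxy hyz)
        · exact .inr ⟨hy'.imp (r.trans hxy) (r.trans hxy), hz⟩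
        · exact .inr ⟨hx, hy.imp (r.trans (r.symm hyz)) (r.trans (r.symm hyz))⟩
        · exact .inr ⟨hx, hz⟩ }

variable (r : Setoid α) (a b : α)

theorem le_merge : r ≤ r.merge a b := fun _ _ h => .inl h

theorem merge_rel : r.merge a b a b := .inr ⟨.inl (r.refl a), .inr (r.refl b)⟩

variable {r a b} in
theorem merge_le {s : Setoid α} (hrs : r ≤ s) (hab : s a b) : r.merge a b ≤ s := by
  have to_a : ∀ z, r z a ∨ r z b → s z a := fun z hz =>
    hz.elim (fun h => hrs h) (fun h => s.trans (hrs h) (s.symm hab))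
  rintro x y (h | ⟨hx, hy⟩)
  exacts [hrs h, s.trans (to_a x hx) (s.symm (to_a y hy))]

variable [Finite α]

theorem nat_card_quotient_merge_le :
    Nat.card (Quotient (r.merge a b)) ≤ Nat.card (Quotient r) := by
  have : Finite (Quotient r) := Quotient.finite _
  refine Nat.card_le_card_of_surjective (Setoid.map_of_le (r.le_merge a b)) ?_
  rintro ⟨x⟩
  exact ⟨Quotient.mk r x, rfl⟩

theorem nat_card_quotient_le_merge_add_one :
    Nat.card (Quotient r) ≤ Nat.card (Quotient (r.merge a b)) + 1 := by
  classical
  have : Finite (Quotient (r.merge a b)) := Quotient.finite _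
  let φ : Quotient r → Option (Quotient (r.merge a b)) :=
    Quotient.lift (fun x => if r x b then none else some (Quotient.mk _ x)) fun x y hxy => by
      have hb : r x b ↔ r y b := ⟨r.trans (r.symm hxy), r.trans hxy⟩
      simp only [hb]
      split_ifs
      exacts [rfl, congrArg some (Quotient.sound (r.le_merge a b hxy))]
  have hφ : Function.Injective φ := by
    rintro ⟨x⟩ ⟨y⟩ h
    apply Quotient.sound
    change (if r x b then none else some _) = (if r y b then none else some _) at h
    split_ifs at h with hx hy hy
    · exact r.trans hx (r.symm hy)
    · rcases Quotient.exact (Option.some_injective _ h) with hxy | ⟨hx', hy'⟩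
      · exact hxy
      · exact r.trans (hx'.resolve_right hx) (r.symm (hy'.resolve_right hy))
  simpa using Nat.card_le_card_of_injective φ hφ

end Setoid

namespace Equiv.Perm

section merge

variable {α : Type*} [DecidableEq α]

theorem SameCycle.setoid_mul_swap_le_merge (f : Perm α) (a b : α) :
    SameCycle.setoid (f * swap a b) ≤ (SameCycle.setoid f).merge a b := by
  refine SameCycle.setoid_le fun x => ?_
  rw [mul_apply]
  rcases eq_or_ne x a with rfl | hxa
  · rw [swap_apply_left]
    exact .inr ⟨.inr (sameCycle_apply_left.2 SameCycle.rfl :), .inl SameCycle.rfl⟩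
  rcases eq_or_ne x b with rfl | hxb
  · rw [swap_apply_right]
    exact .inr ⟨.inl (sameCycle_apply_left.2 SameCycle.rfl :), .inr SameCycle.rfl⟩
  rw [swap_apply_of_ne_of_ne hxa hxb]
  exact .inl (sameCycle_apply_left.2 SameCycle.rfl)

theorem merge_sameCycle_setoid_mul_swap (f : Perm α) (a b : α) :
    (SameCycle.setoid (f * swap a b)).merge a b = (SameCycle.setoid f).merge a b := by
  have h := SameCycle.setoid_mul_swap_le_merge (f * swap a b) a b
  rw [mul_swap_mul_self] at h
  exact le_antisymm
    (Setoid.merge_le (SameCycle.setoid_mul_swap_le_merge f a b) (Setoid.merge_rel _ a b))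
    (Setoid.merge_le h (Setoid.merge_rel _ a b))

end merge

variable {k : ℕ} {β : Type*}

theorem nat_card_quotient_sameCycle_eq_cyc (π : Perm (Fin k)) :
    Nat.card (Quotient (SameCycle.setoid π)) = cyc π := by
  rw [nat_card_quotient_sameCycle, card_fixedPoints, Fintype.card_fin, cyc, cycleType_def,
    Multiset.card_map]
  rfl

theorem nat_card_comp_eq_comp (σ τ : Perm (Fin k)) :
    Nat.card {g : Fin k → β // g ∘ σ = g ∘ τ} = Nat.card β ^ cyc (σ * τ⁻¹) := by
  rw [← nat_card_quotient_sameCycle_eq_cyc, ← nat_card_comp_eq_self]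
  refine Nat.card_congr (Equiv.subtypeEquivRight fun g => ⟨fun h => ?_, fun h => ?_⟩) <;> ext x
  · simpa using congrFun h (τ⁻¹ x)
  · simpa using congrFun h (τ x)

theorem cyc_inv (π : Perm (Fin k)) : cyc π⁻¹ = cyc π := by
  rw [cyc, cyc, cycleType_inv]

theorem sign_eq_neg_one_pow_add_cyc (π : Perm (Fin k)) : sign π = (-1) ^ (k + cyc π) := by
  have hsum : π.cycleType.sum ≤ k := by
    simpa [sum_cycleType] using Finset.card_le_univ π.support
  have hexp : k + cyc π =
      (π.cycleType.sum + Multiset.card π.cycleType) + 2 * (k - π.cycleType.sum) := by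
    rw [cyc]; omega
  rw [sign_of_cycleType, hexp, pow_add _ _ (2 * _), pow_mul, neg_one_sq, one_pow, mul_one]

theorem cyc_mul_swap (σ : Perm (Fin k)) {a b : Fin k} (hab : a ≠ b) :
    cyc (σ * swap a b) = cyc σ + 1 ∨ cyc σ = cyc (σ * swap a b) + 1 := by
  have hne : cyc (σ * swap a b) ≠ cyc σ := by
    intro h
    have hsign := sign_eq_neg_one_pow_add_cyc (σ * swap a b)
    rw [h, ← sign_eq_neg_one_pow_add_cyc, sign_mul, sign_swap hab, mul_neg_one] at hsign
    exact units_ne_neg_self _ hsign.symm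
  have h₁ := (SameCycle.setoid σ).nat_card_quotient_merge_le a b
  have h₂ := (SameCycle.setoid σ).nat_card_quotient_le_merge_add_one a b
  have h₃ := (SameCycle.setoid (σ * swap a b)).nat_card_quotient_merge_le a b
  have h₄ := (SameCycle.setoid (σ * swap a b)).nat_card_quotient_le_merge_add_one a b
  rw [merge_sameCycle_setoid_mul_swap] at h₃ h₄
  rw [nat_card_quotient_sameCycle_eq_cyc] at h₁ h₂ h₃ h₄
  omega

end Equiv.Perm

section Gram

open Equiv.Perm

variable {k q : ℕ}

theorem gram_transpose : (Gram k q)ᵀ = Gram k q := by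
  ext σ τ
  rw [transpose_apply, Gram, of_apply, of_apply, ← cyc_inv (σ * τ⁻¹), _root_.mul_inv_rev,
    inv_inv]

variable (k q) in
def gramFactor : Matrix (Perm (Fin k)) ((Fin k → Fin q) × (Fin k → Fin q)) ℝ :=
  of fun σ p => if p.2 = p.1 ∘ σ then 1 else 0

theorem gram_eq_gramFactor_mul_conjTranspose :
    Gram k q = gramFactor k q * (gramFactor k q)ᴴ := by
  ext σ τ
  rw [Gram, of_apply, Matrix.mul_apply, Fintype.sum_prod_type]
  simp only [gramFactor, conjTranspose_apply, of_apply, star_trivial, mul_boole,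
    Finset.sum_ite_eq', Finset.mem_univ, if_true, Finset.sum_boole]
  have hcount := nat_card_comp_eq_comp (β := Fin q) σ τ
  rw [Nat.card_eq_fintype_card, Fintype.card_subtype, Nat.card_eq_fintype_card,
    Fintype.card_fin] at hcount
  simp_rw [eq_comm (a := _ ∘ ⇑τ), hcount, Nat.cast_pow]

theorem vecMul_gramFactor_apply (x : Perm (Fin k) → ℝ) {f : Fin k → Fin q}
    (hf : Function.Injective f) (σ : Perm (Fin k)) :
    (x ᵥ* gramFactor k q) (f, f ∘ σ) = x σ := by
  simp only [vecMul, dotProduct, gramFactor, of_apply, hf.comp_left.eq_iff, DFunLike.coe_fn_eq,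
    mul_ite, mul_one, mul_zero, Finset.sum_ite_eq, Finset.mem_univ, if_true]

theorem gram_posDef (hkq : k ≤ q) : (Gram k q).PosDef := by
  rw [gram_eq_gramFactor_mul_conjTranspose]
  refine .mul_conjTranspose_self _ fun x y hxy => funext fun σ => ?_
  have hf := Fin.castLE_injective hkq
  rw [← vecMul_gramFactor_apply x hf, ← vecMul_gramFactor_apply y hf]
  exact congrFun hxy _

end Gram

noncomputable def μ₂ (x y : ℝ) : ℝ := (x * y ^ 2 - x) / (x ^ 2 * y ^ 2 - 1)

theorem μ₂_swap_add_mul_μ₂ {x y : ℝ} (h : x ^ 2 * y ^ 2 ≠ 1) :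
    μ₂ y x + x * y * μ₂ x y = y := by
  have h' : x ^ 2 * y ^ 2 - 1 ≠ 0 := sub_ne_zero.2 h
  rw [μ₂, μ₂, mul_comm (y ^ 2) (x ^ 2), mul_div_assoc', ← add_div, div_eq_iff h']
  ring

theorem pow_mul_μ₂_add_pow_mul_μ₂ {x y : ℝ} (h : x ^ 2 * y ^ 2 ≠ 1) {n m : ℕ}
    (hnm : m = n + 1 ∨ n = m + 1) :
    (x * y) ^ n * μ₂ y x + (x * y) ^ m * μ₂ x y = x ^ n * y ^ m := by
  rcases hnm with rfl | rfl
  · linear_combination (x * y) ^ n * μ₂_swap_add_mul_μ₂ h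
  · have h' : y ^ 2 * x ^ 2 ≠ 1 := by rwa [mul_comm]
    linear_combination (x * y) ^ m * μ₂_swap_add_mul_μ₂ h'

open Equiv.Perm in
theorem gram_mulVec_transposition {k d D : ℕ} (hdD : d * D ≠ 1) {a b : Fin k} (hab : a ≠ b) :
    Gram k (d * D) *ᵥ (μ₂ D d • Pi.single 1 1 + μ₂ d D • Pi.single (swap a b) 1) =
      fun σ => (d : ℝ) ^ cyc σ * (D : ℝ) ^ cyc (σ * (swap a b)⁻¹) := by
  have h : (d : ℝ) ^ 2 * (D : ℝ) ^ 2 ≠ 1 := by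
    rw [← mul_pow, Ne, pow_eq_one_iff_of_nonneg (by positivity) two_ne_zero]
    exact_mod_cast hdD
  ext σ
  simp only [mulVec_add, mulVec_smul, mulVec_single_one, Pi.add_apply, Pi.smul_apply, col_apply,
    Gram, of_apply, inv_one, mul_one, swap_inv, smul_eq_mul, Nat.cast_mul]
  rw [mul_comm (μ₂ D d), mul_comm (μ₂ d D)]
  exact pow_mul_μ₂_add_pow_mul_μ₂ h (cyc_mul_swap σ hab)

theorem Ck_apply_eq_mulVec (k d D : ℕ) (τ θ : Equiv.Perm (Fin k)) :
    Ck k d D τ θ =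
      (WgM k (d * D) *ᵥ fun σ => (d : ℝ) ^ cyc σ * (D : ℝ) ^ cyc (σ * θ⁻¹)) τ := by
  have hsymm : (WgM k (d * D))ᵀ = WgM k (d * D) := by
    rw [WgM, transpose_nonsing_inv, gram_transpose]
  rw [← hsymm]
  simp only [Ck, of_apply, mulVec, dotProduct, transpose_apply, mul_assoc]

theorem Ck_transposition_block_general (k d D : ℕ) (hk : 2 ≤ k)
    (hkdD : k ≤ d * D) (t t' : Equiv.Perm (Fin k)) (ht : t.IsSwap) (ht' : t'.IsSwap) :
    Ck k d D t t' =
      if t = t' then ((d : ℝ) * D ^ 2 - d) / ((d : ℝ) ^ 2 * D ^ 2 - 1) else 0 := by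
  obtain ⟨a, b, hab, rfl⟩ := ht'
  have ht1 : t ≠ 1 := by
    obtain ⟨c, e, hce, rfl⟩ := ht
    exact fun h => hce (swap_eq_one_iff.1 h)
  have hGram := (gram_posDef hkdD).isUnit
  have hW : WgM k (d * D) *ᵥ (fun σ => (d : ℝ) ^ cyc σ * (D : ℝ) ^ cyc (σ * (swap a b)⁻¹)) =
      μ₂ D d • Pi.single 1 1 + μ₂ d D • Pi.single (swap a b) 1 := by
    rw [WgM, ← gram_mulVec_transposition (by omega) hab, mulVec_mulVec,
      nonsing_inv_mul _ ((isUnit_iff_isUnit_det _).1 hGram), one_mulVec]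
  rw [Ck_apply_eq_mulVec, hW]
  simp [Pi.single_apply, ht1, μ₂]

/-- The diagonal block of `C_k` indexed by transpositions equals `μ₂ = (dD² − d)/(d²D² − 1)`
times the identity: `⟨t|C_k|t'⟩ = 0` for distinct transpositions and `⟨t|C_k|t⟩ = μ₂`. -/
theorem Ck_transposition_block (k d D : ℕ) (hk : 2 ≤ k) (hd : 0 < d) (hD : 0 < D)
    (hkdD : k ≤ d * D) (t t' : Equiv.Perm (Fin k)) (ht : t.IsSwap) (ht' : t'.IsSwap) :
    Ck k d D t t' =
      if t = t' then ((d : ℝ) * D ^ 2 - d) / ((d : ℝ) ^ 2 * D ^ 2 - 1) else 0 :=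
  Ck_transposition_block_general k d D hk hkdD t t' ht ht'
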